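/- Let G be a simple graph in which every edge lies in a 3-clique, no two distinct 3-cliques of G share two vertices, and G is 2-robustly 3-colourable. Then the monotone 1-in-3 instance C(G) satisfies: (II) no two distinct clauses of C(G) have more than one variable in common; (I) for all variables x, y, z of C(G) (not necessarily distinct) such that {x, y, z} is not a clause of C(G), there is an assignment ν that 1-in-3 satisfies C(G) for which at least two of the three entries of the triple (ν(x), ν(y), ν(z)) are true; (IV) for all variables w, x, y, z of C(G) (not necessarily distinct), there is an assignment ν that 1-in-3 satisfies C(G) for which at least two of the four entries of (ν(w), ν(x), ν(y), ν(z)) are true. -/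

import Mathlib

/-!
A proper 3-colouring `c` of `G` gives the satisfying assignment `(i, j) ↦ (c i = j)`, and
2-robustness says such a colouring can make any two variables true unless they *conflict*:
they sit at one vertex with different colours, or at adjacent vertices with the same colour.
Three pairwise conflicting variables either sit at one vertex (a vertex clause) or share a
colour on a triangle (a clique clause), which gives (I). Four pairwise conflicting variables
would need four colours at one vertex or a `K₄`, and a `K₄` contains two triangles sharing an
edge; this gives (IV). (II) is bookkeeping: vertex clauses are the fibres over `V`, clique clauses
of colour `j` are triangles placed at height `j`.
-/

/-- Exactly one of three Boolean values is `true`. -/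
def oneOf3 (a b c : Bool) : Prop :=
  (a = true ∧ b = false ∧ c = false) ∨ (a = false ∧ b = true ∧ c = false) ∨
  (a = false ∧ b = false ∧ c = true)

/-- `ν` 1-in-3 satisfies the monotone 1-in-3 instance `C(G)`. -/
def CSat {V : Type} (G : SimpleGraph V) (ν : V × Fin 3 → Bool) : Prop :=
  (∀ i : V, oneOf3 (ν (i, 0)) (ν (i, 1)) (ν (i, 2))) ∧
  (∀ i₁ i₂ i₃ : V, G.Adj i₁ i₂ → G.Adj i₁ i₃ → G.Adj i₂ i₃ →
    ∀ j : Fin 3, oneOf3 (ν (i₁, j)) (ν (i₂, j)) (ν (i₃, j)))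

/-- The clauses of the instance `C(G)`, as finite sets of variables: a vertex clause
`{(i,0), (i,1), (i,2)}` for each vertex `i`, and a clique clause `{(i₁,j), (i₂,j), (i₃,j)}`
for each 3-clique `{i₁, i₂, i₃}` of `G` and colour `j`. -/
def IsCClause {V : Type} [DecidableEq V] (G : SimpleGraph V)
    (s : Finset (V × Fin 3)) : Prop :=
  (∃ i : V, s = {(i, 0), (i, 1), (i, 2)}) ∨
  (∃ (i₁ i₂ i₃ : V) (j : Fin 3), G.Adj i₁ i₂ ∧ G.Adj i₁ i₃ ∧ G.Adj i₂ i₃ ∧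
    s = {(i₁, j), (i₂, j), (i₃, j)})

open Finset

section Conflict

variable {V : Type} {G : SimpleGraph V} {p q r : V × Fin 3}

def Conflict (G : SimpleGraph V) (p q : V × Fin 3) : Prop :=
  (p.1 = q.1 ∧ p.2 ≠ q.2) ∨ (G.Adj p.1 q.1 ∧ p.2 = q.2)

theorem Conflict.fst_eq_of_snd_ne (h : Conflict G p q) (hne : p.2 ≠ q.2) : p.1 = q.1 := by
  rcases h with ⟨h₁, -⟩ | ⟨-, h₂⟩
  exacts [h₁, absurd h₂ hne]

theorem Conflict.snd_ne_of_fst_eq (h : Conflict G p q) (heq : p.1 = q.1) : p.2 ≠ q.2 := by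
  rcases h with ⟨-, h₂⟩ | ⟨h₁, -⟩
  exacts [h₂, absurd (heq ▸ h₁) (G.irrefl)]

theorem Conflict.adj_of_snd_eq (h : Conflict G p q) (heq : p.2 = q.2) : G.Adj p.1 q.1 := by
  rcases h with ⟨-, h₂⟩ | ⟨h₁, -⟩
  exacts [absurd heq h₂, h₁]

theorem Conflict.snd_eq_of_fst_ne (h : Conflict G p q) (hne : p.1 ≠ q.1) : p.2 = q.2 :=
  not_not.mp fun h₂ ↦ hne (h.fst_eq_of_snd_ne h₂)

theorem fst_eq_of_conflict_of_fst_eq (hpq : Conflict G p q) (hpr : Conflict G p r)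
    (hqr : Conflict G q r) (heq : p.1 = q.1) : r.1 = p.1 := by
  by_cases hp : p.2 = r.2
  · have hq : q.2 ≠ r.2 := hp ▸ (hpq.snd_ne_of_fst_eq heq).symm
    exact (hqr.fst_eq_of_snd_ne hq).symm.trans heq.symm
  · exact (hpr.fst_eq_of_snd_ne hp).symm

theorem snd_eq_of_conflict_of_snd_eq (hpq : Conflict G p q) (hpr : Conflict G p r)
    (hqr : Conflict G q r) (heq : p.2 = q.2) : r.2 = p.2 := by
  by_contra hne
  have hp : p.1 = r.1 := hpr.fst_eq_of_snd_ne (Ne.symm hne)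
  have hq : q.1 = r.1 := hqr.fst_eq_of_snd_ne (heq ▸ Ne.symm hne)
  exact hpq.snd_ne_of_fst_eq (hp.trans hq.symm) heq

end Conflict

section Satisfiability

variable {V : Type} {G : SimpleGraph V}

theorem cSat_of_coloring (c : V → Fin 3) (hc : ∀ x y : V, G.Adj x y → c x ≠ c y) :
    CSat G (fun p ↦ decide (c p.1 = p.2)) := by
  refine ⟨fun i ↦ ?_, fun i₁ i₂ i₃ h₁₂ h₁₃ h₂₃ j ↦ ?_⟩
  · unfold oneOf3
    simp only [decide_eq_true_eq, decide_eq_false_iff_not]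
    omega
  · have := hc _ _ h₁₂; have := hc _ _ h₁₃; have := hc _ _ h₂₃
    unfold oneOf3
    simp only [decide_eq_true_eq, decide_eq_false_iff_not]
    omega

theorem exists_cSat_of_not_conflict
    (hrob : ∀ u v : V, ∀ cu cv : Fin 3, (u = v → cu = cv) → (G.Adj u v → cu ≠ cv) →
      ∃ c : V → Fin 3, (∀ x y : V, G.Adj x y → c x ≠ c y) ∧ c u = cu ∧ c v = cv)
    {p q : V × Fin 3} (h : ¬ Conflict G p q) :
    ∃ ν : V × Fin 3 → Bool, CSat G ν ∧ ν p = true ∧ ν q = true := by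
  obtain ⟨c, hc, hp, hq⟩ := hrob p.1 q.1 p.2 q.2
    (fun heq ↦ not_not.mp fun hne ↦ h (Or.inl ⟨heq, hne⟩))
    (fun hadj heq ↦ h (Or.inr ⟨hadj, heq⟩))
  exact ⟨_, cSat_of_coloring c hc, by simp [hp], by simp [hq]⟩

end Satisfiability

section Clauses

variable {V : Type} [DecidableEq V] {G : SimpleGraph V}

theorem eq_of_adj_of_card_inter_le_one
    (hcliq : ∀ s t : Finset V, G.IsNClique 3 s → G.IsNClique 3 t → s ≠ t →
      (s ∩ t).card ≤ 1)
    {a b c d : V} (hab : G.Adj a b) (hac : G.Adj a c) (hbc : G.Adj b c) (had : G.Adj a d)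
    (hbd : G.Adj b d) : c = d := by
  by_contra hcd
  have hne : ({a, b, c} : Finset V) ≠ {a, b, d} := fun h ↦ by
    have : c ∈ ({a, b, d} : Finset V) := h ▸ by simp
    simp only [mem_insert, mem_singleton] at this
    rcases this with h' | h' | h'
    exacts [hac.ne h'.symm, hbc.ne h'.symm, hcd h']
  have hsub : ({a, b} : Finset V) ⊆ {a, b, c} ∩ {a, b, d} := by
    intro x hx
    simp only [mem_insert, mem_singleton] at hx
    rcases hx with rfl | rfl <;> simp
  have := (card_le_card hsub).trans <| hcliq _ _
    (SimpleGraph.is3Clique_triple_iff.mpr ⟨hab, hac, hbc⟩)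
    (SimpleGraph.is3Clique_triple_iff.mpr ⟨hab, had, hbd⟩) hne
  rw [card_pair hab.ne] at this
  omega

theorem mem_vertexClause {i : V} {p : V × Fin 3} :
    p ∈ ({(i, 0), (i, 1), (i, 2)} : Finset (V × Fin 3)) ↔ p.1 = i := by
  obtain ⟨v, k⟩ := p
  fin_cases k <;> simp [eq_comm]

theorem cliqueClause_eq_image (a b c : V) (j : Fin 3) :
    ({(a, j), (b, j), (c, j)} : Finset (V × Fin 3)) = ({a, b, c} : Finset V).image (·, j) := by
  simp [image_insert]

theorem IsCClause.vertex_or_clique {s : Finset (V × Fin 3)} (hs : IsCClause G s) :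
    (∃ i : V, ∀ p, p ∈ s ↔ p.1 = i) ∨
      ∃ (t : Finset V) (j : Fin 3), G.IsNClique 3 t ∧ s = t.image (·, j) := by
  rcases hs with ⟨i, rfl⟩ | ⟨a, b, c, j, hab, hac, hbc, rfl⟩
  · exact Or.inl ⟨i, fun _ ↦ mem_vertexClause⟩
  · exact Or.inr ⟨_, j, SimpleGraph.is3Clique_triple_iff.mpr ⟨hab, hac, hbc⟩,
      cliqueClause_eq_image a b c j⟩

theorem card_inter_le_one_of_isCClause
    (hcliq : ∀ s t : Finset V, G.IsNClique 3 s → G.IsNClique 3 t → s ≠ t →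
      (s ∩ t).card ≤ 1)
    {s t : Finset (V × Fin 3)} (hs : IsCClause G s) (ht : IsCClause G t) (hst : s ≠ t) :
    (s ∩ t).card ≤ 1 := by
  rcases hs.vertex_or_clique with ⟨i, hi⟩ | ⟨u, j, hu, rfl⟩ <;>
    rcases ht.vertex_or_clique with ⟨i', hi'⟩ | ⟨u', j', hu', rfl⟩
  · refine card_le_one.mpr fun p hp _ _ ↦ absurd (ext fun r ↦ ?_) hst
    rw [mem_inter, hi, hi'] at hp
    rw [hi, hi', ← hp.1, hp.2]
  · refine card_le_one.mpr fun p hp q hq ↦ ?_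
    simp only [mem_inter, hi, mem_image] at hp hq
    obtain ⟨hv, v, -, rfl⟩ := hp
    obtain ⟨hw, w, -, rfl⟩ := hq
    exact congrArg (·, j') (hv.trans hw.symm)
  · refine card_le_one.mpr fun p hp q hq ↦ ?_
    simp only [mem_inter, hi', mem_image] at hp hq
    obtain ⟨⟨v, -, rfl⟩, hv⟩ := hp
    obtain ⟨⟨w, -, rfl⟩, hw⟩ := hq
    exact congrArg (·, j) (hv.trans hw.symm)
  · obtain rfl | hj := eq_or_ne j j'
    · have hinj : Function.Injective fun v : V ↦ (v, j) := fun _ _ h ↦ congrArg Prod.fst h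
      rw [← image_inter _ _ hinj, card_image_of_injective _ hinj]
      exact hcliq u u' hu hu' fun h ↦ hst (h ▸ rfl)
    · refine card_le_one.mpr fun p hp _ _ ↦ ?_
      simp only [mem_inter, mem_image] at hp
      obtain ⟨⟨v, -, rfl⟩, w, -, h⟩ := hp
      exact absurd (congrArg Prod.snd h).symm hj

theorem isCClause_of_conflict {x y z : V × Fin 3} (hxy : Conflict G x y)
    (hxz : Conflict G x z) (hyz : Conflict G y z) : IsCClause G {x, y, z} := by
  by_cases hfst : x.1 = y.1
  · have hz : z.1 = x.1 := fst_eq_of_conflict_of_fst_eq hxy hxz hyz hfst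
    have := hxy.snd_ne_of_fst_eq hfst
    have := hxz.snd_ne_of_fst_eq hz.symm
    have := hyz.snd_ne_of_fst_eq (hfst.symm.trans hz.symm)
    refine Or.inl ⟨x.1, ext fun p ↦ ?_⟩
    rw [mem_vertexClause]
    simp only [mem_insert, mem_singleton]
    constructor
    · rintro (rfl | rfl | rfl) <;> simp_all
    · intro hp
      -- three distinct colours exhaust `Fin 3`
      have : p.2 = x.2 ∨ p.2 = y.2 ∨ p.2 = z.2 := by omega
      rcases this with h | h | h
      exacts [Or.inl (Prod.ext hp h), Or.inr (Or.inl (Prod.ext (hp.trans hfst) h)),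
        Or.inr (Or.inr (Prod.ext (hp.trans hz.symm) h))]
  · have hsnd : x.2 = y.2 := hxy.snd_eq_of_fst_ne hfst
    have hz : z.2 = x.2 := snd_eq_of_conflict_of_snd_eq hxy hxz hyz hsnd
    obtain ⟨a, j⟩ := x
    obtain ⟨b, j₂⟩ := y
    obtain ⟨c, j₃⟩ := z
    dsimp only at hsnd hz
    subst j₂ j₃
    exact Or.inr ⟨a, b, c, j, hxy.adj_of_snd_eq rfl, hxz.adj_of_snd_eq rfl,
      hyz.adj_of_snd_eq rfl, rfl⟩

theorem exists_not_conflict_of_four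
    (hcliq : ∀ s t : Finset V, G.IsNClique 3 s → G.IsNClique 3 t → s ≠ t →
      (s ∩ t).card ≤ 1)
    (w x y z : V × Fin 3) :
    ¬ Conflict G w x ∨ ¬ Conflict G w y ∨ ¬ Conflict G w z ∨ ¬ Conflict G x y ∨
      ¬ Conflict G x z ∨ ¬ Conflict G y z := by
  by_contra! h
  obtain ⟨hwx, hwy, hwz, hxy, hxz, hyz⟩ := h
  by_cases hfst : w.1 = x.1
  · have hy := fst_eq_of_conflict_of_fst_eq hwx hwy hxy hfst
    have hz := fst_eq_of_conflict_of_fst_eq hwx hwz hxz hfst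
    have := hwx.snd_ne_of_fst_eq hfst
    have := hwy.snd_ne_of_fst_eq hy.symm
    have := hwz.snd_ne_of_fst_eq hz.symm
    have := hxy.snd_ne_of_fst_eq (hfst.symm.trans hy.symm)
    have := hxz.snd_ne_of_fst_eq (hfst.symm.trans hz.symm)
    have := hyz.snd_ne_of_fst_eq (hy.trans hz.symm)
    -- four distinct colours in `Fin 3`
    omega
  · have hsnd := hwx.snd_eq_of_fst_ne hfst
    have hy := snd_eq_of_conflict_of_snd_eq hwx hwy hxy hsnd
    have hz := snd_eq_of_conflict_of_snd_eq hwx hwz hxz hsnd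
    have hyz' : y.1 = z.1 := eq_of_adj_of_card_inter_le_one hcliq
      (hwx.adj_of_snd_eq hsnd) (hwy.adj_of_snd_eq hy.symm) (hxy.adj_of_snd_eq (hsnd ▸ hy.symm))
      (hwz.adj_of_snd_eq hz.symm) (hxz.adj_of_snd_eq (hsnd ▸ hz.symm))
    exact G.irrefl (hyz' ▸ hyz.adj_of_snd_eq (hy.trans hz.symm))

end Clauses

theorem stmt_15_general {V : Type} [DecidableEq V] (G : SimpleGraph V)
    (hcliq : ∀ s t : Finset V, G.IsNClique 3 s → G.IsNClique 3 t → s ≠ t →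
      (s ∩ t).card ≤ 1)
    (hrob : ∀ u v : V, ∀ cu cv : Fin 3, (u = v → cu = cv) → (G.Adj u v → cu ≠ cv) →
      ∃ c : V → Fin 3, (∀ x y : V, G.Adj x y → c x ≠ c y) ∧ c u = cu ∧ c v = cv) :
    -- (II)
    (∀ s t : Finset (V × Fin 3), IsCClause G s → IsCClause G t → s ≠ t →
      (s ∩ t).card ≤ 1) ∧
    -- (I)
    (∀ x y z : V × Fin 3, ¬ IsCClause G {x, y, z} →
      ∃ ν : V × Fin 3 → Bool, CSat G ν ∧
        2 ≤ (ν x).toNat + (ν y).toNat + (ν z).toNat) ∧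
    -- (IV)
    (∀ w x y z : V × Fin 3,
      ∃ ν : V × Fin 3 → Bool, CSat G ν ∧
        2 ≤ (ν w).toNat + (ν x).toNat + (ν y).toNat + (ν z).toNat) := by
  refine ⟨fun s t ↦ card_inter_le_one_of_isCClause hcliq, fun x y z hxyz ↦ ?_,
    fun w x y z ↦ ?_⟩
  · have : ¬ Conflict G x y ∨ ¬ Conflict G x z ∨ ¬ Conflict G y z := by
      by_contra! h
      exact hxyz (isCClause_of_conflict h.1 h.2.1 h.2.2)
    rcases this with h | h | h <;>
    · obtain ⟨ν, hν, hp, hq⟩ := exists_cSat_of_not_conflict hrob h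
      exact ⟨ν, hν, by simp only [hp, hq, Bool.toNat_true]; omega⟩
  · rcases exists_not_conflict_of_four hcliq w x y z with h | h | h | h | h | h <;>
    · obtain ⟨ν, hν, hp, hq⟩ := exists_cSat_of_not_conflict hrob h
      exact ⟨ν, hν, by simp only [hp, hq, Bool.toNat_true]; omega⟩

/-- Let `G` be a simple graph in which every edge lies in a 3-clique, no
two distinct 3-cliques share two vertices, and which is 2-robustly 3-colourable. Then:
(II) distinct clauses of `C(G)` share at most one variable; (I) for any triple of
variables not forming a clause there is a 1-in-3 satisfying assignment making at least two
of its entries true; (IV) for any quadruple of variables there is a 1-in-3 satisfying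
assignment making at least two of its entries true. -/
theorem stmt_15 {V : Type} [DecidableEq V] (G : SimpleGraph V)
    (htri : ∀ u v : V, G.Adj u v → ∃ w : V, G.Adj u w ∧ G.Adj v w)
    (hcliq : ∀ s t : Finset V, G.IsNClique 3 s → G.IsNClique 3 t → s ≠ t →
      (s ∩ t).card ≤ 1)
    (hrob : ∀ u v : V, ∀ cu cv : Fin 3, (u = v → cu = cv) → (G.Adj u v → cu ≠ cv) →
      ∃ c : V → Fin 3, (∀ x y : V, G.Adj x y → c x ≠ c y) ∧ c u = cu ∧ c v = cv) :
    -- (II)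
    (∀ s t : Finset (V × Fin 3), IsCClause G s → IsCClause G t → s ≠ t →
      (s ∩ t).card ≤ 1) ∧
    -- (I)
    (∀ x y z : V × Fin 3, ¬ IsCClause G {x, y, z} →
      ∃ ν : V × Fin 3 → Bool, CSat G ν ∧
        2 ≤ (ν x).toNat + (ν y).toNat + (ν z).toNat) ∧
    -- (IV)
    (∀ w x y z : V × Fin 3,
      ∃ ν : V × Fin 3 → Bool, CSat G ν ∧
        2 ≤ (ν w).toNat + (ν x).toNat + (ν y).toNat + (ν z).toNat) :=
  stmt_15_general G hcliq hrob
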